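/- arXiv:2505.19921 — 2 statements merged into one kernel-verified Lean document; each statement's English description precedes it below -/
import Mathlib

section
/- Let k be a field, V a k-vector space, A = S(V) the symmetric algebra, and M an A-central A-bimodule (i.e. a·m = m·a for all a ∈ A, m ∈ M). Then the Koszul cohomology differential vanishes: for every p ≥ 0 and every k-linear map f : W_p → M, b_K(f) = 0. Consequently the Koszul cohomology is HK^p(A,M) = Hom_k(W_p, M) for all p. -/
open TensorProduct PiTensorProduct

set_option maxHeartbeats 1600000
set_option synthInstance.maxHeartbeats 400000

noncomputable section

variable (k : Type*) [Field k] (V : Type*) [AddCommGroup V] [Module k V]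

/-- The `p`-th tensor power of `V` over `k`. -/
abbrev TP (p : ℕ) := PiTensorProduct k (fun _ : Fin p => V)

/-- The antisymmetrizer map `Ant_p : V^{⊗p} → V^{⊗p}`,
`v_1 ⊗ ⋯ ⊗ v_p ↦ Σ_σ sgn(σ) v_{σ⁻¹(1)} ⊗ ⋯ ⊗ v_{σ⁻¹(p)}`. -/
def Ant (p : ℕ) : TP k V p →ₗ[k] TP k V p :=
  ∑ σ : Equiv.Perm (Fin p),
    (Equiv.Perm.sign σ : ℤ) • (PiTensorProduct.reindex k (fun _ : Fin p => V) σ).toLinearMap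

/-- Canonical identification of tensor powers of equal degrees. -/
def tpCast {m n : ℕ} (h : m = n) : TP k V m ≃ₗ[k] TP k V n :=
  PiTensorProduct.reindex k (fun _ : Fin m => V) (finCongr h)

/-- The canonical identification `V^{⊗p} ⊗ V^{⊗q} ≅ V^{⊗(p+q)}`. -/
def tpMul (p q : ℕ) : (TP k V p ⊗[k] TP k V q) ≃ₗ[k] TP k V (p + q) :=
  (PiTensorProduct.tmulEquiv (ι := Fin p) (ι₂ := Fin q) k V).trans
    (PiTensorProduct.reindex k (fun _ => V) finSumFinEquiv)

/-- The canonical identification `V^{⊗1} ≅ V`. -/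
def oneEquiv : TP k V 1 ≃ₗ[k] V := PiTensorProduct.subsingletonEquiv (0 : Fin 1)

/-- The canonical identification `V^{⊗0} ≅ k`. -/
def zeroEquiv : TP k V 0 ≃ₗ[k] k := PiTensorProduct.isEmptyEquiv (Fin 0)

/-- The image of `V^{⊗i} ⊗ R ⊗ V^{⊗j}` in `V^{⊗(i+2+j)}`. -/
def sandwich (Rq : Submodule k (TP k V 2)) (i j : ℕ) : Submodule k (TP k V (i + 2 + j)) :=
  LinearMap.range
    ((tpCast k V (show i + (2 + j) = i + 2 + j by omega)).toLinearMap ∘ₗ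
      (tpMul k V i (2 + j)).toLinearMap ∘ₗ
      (LinearMap.lTensor (TP k V i)
        ((tpMul k V 2 j).toLinearMap ∘ₗ LinearMap.rTensor (TP k V j) Rq.subtype)))

/-- The subspaces `W_p = ⋂_{i+2+j=p} V^{⊗i} ⊗ R ⊗ V^{⊗j}` (with `W_0 = k`, `W_1 = V`,
`W_2 = R`, these being the degenerate cases of the intersection). -/
def W (Rq : Submodule k (TP k V 2)) (p : ℕ) : Submodule k (TP k V p) :=
  ⨅ (i : ℕ) (j : ℕ) (h : i + 2 + j = p),
    Submodule.map (tpCast k V h).toLinearMap (sandwich k V Rq i j)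

instance instTPAddCommGroup (p : ℕ) : AddCommGroup (TP k V p) := inferInstance

instance instWAddCommGroup (Rq : Submodule k (TP k V 2)) (p : ℕ) :
    AddCommGroup (W k V Rq p) := Submodule.addCommGroup _

instance instWModule (Rq : Submodule k (TP k V 2)) (p : ℕ) :
    Module k (W k V Rq p) := Submodule.module _
variable (Rq : Submodule k (TP k V 2))

/-- A chosen `k`-linear projection of `V^{⊗p}` onto `W_p` (used only to produce canonical
restriction maps: all maps defined with it are independent of the choice on the relevant
subspaces). -/
def projW (p : ℕ) : TP k V p →ₗ[k] (W k V Rq p) :=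
  (LinearMap.exists_leftInverse_of_injective (W k V Rq p).subtype
    (Submodule.ker_subtype _)).choose

/-- The inclusion `W_r ⊆ W_p ⊗ W_q` (for `p + q = r`), decomposing a Koszul element. -/
def splitAt (p q r : ℕ) (h : p + q = r) :
    (W k V Rq r) →ₗ[k] (W k V Rq p) ⊗[k] (W k V Rq q) :=
  (TensorProduct.map (projW k V Rq p) (projW k V Rq q)) ∘ₗ
    (tpMul k V p q).symm.toLinearMap ∘ₗ (tpCast k V h.symm).toLinearMap ∘ₗ
    (W k V Rq r).subtype

/-- The identification `W_1 = V`. -/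
def oneW : (W k V Rq 1) →ₗ[k] V := (oneEquiv k V).toLinearMap ∘ₗ (W k V Rq 1).subtype

/-- Transport along an equality of degrees. -/
def wCast {a b : ℕ} (h : a = b) : (W k V Rq a) ≃ₗ[k] (W k V Rq b) := by
  subst h; exact LinearEquiv.refl k _

/-- The identification `V^{⊗2} ≅ V ⊗ V`. -/
def tp2 : TP k V 2 ≃ₗ[k] V ⊗[k] V :=
  (tpMul k V 1 1).symm ≪≫ₗ TensorProduct.congr (oneEquiv k V) (oneEquiv k V)

/-- The linear map `V ⊗ V → T(V)`, `x ⊗ y ↦ ι(x)·ι(y)`, precomposed with `V^{⊗2} ≅ V ⊗ V`. -/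
def emb2 : TP k V 2 →ₗ[k] TensorAlgebra k V :=
  LinearMap.mul' k (TensorAlgebra k V) ∘ₗ
    TensorProduct.map (TensorAlgebra.ι k) (TensorAlgebra.ι k) ∘ₗ (tp2 k V).toLinearMap

/-- The quadratic algebra `A = T(V)/(R)` associated with a subspace `R ⊆ V ⊗ V`. -/
def QuadAlg := RingQuot (fun a b : TensorAlgebra k V => a ∈ Submodule.map (emb2 k V) Rq ∧ b = 0)

instance : Ring (QuadAlg k V Rq) := by unfold QuadAlg; infer_instance
instance : Algebra k (QuadAlg k V Rq) := by unfold QuadAlg; infer_instance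

/-- The canonical linear map `V → A = T(V)/(R)`. -/
def ιQ : V →ₗ[k] QuadAlg k V Rq :=
  (RingQuot.mkAlgHom k _).toLinearMap ∘ₗ TensorAlgebra.ι k

/-- The subspace of `V^{⊗2}` spanned by the elements `x ⊗ y - y ⊗ x`. -/
def Rsym : Submodule k (TP k V 2) :=
  Submodule.span k {w : TP k V 2 | ∃ x y : V, w = (tp2 k V).symm (x ⊗ₜ[k] y - y ⊗ₜ[k] x)}

/-- The symmetric algebra `S(V) = T(V)/(R)` as a quadratic algebra. -/
def SV := QuadAlg k V (Rsym k V)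

instance : Ring (SV k V) := by unfold SV; infer_instance
instance : Algebra k (SV k V) := by unfold SV; infer_instance
/-- An (`k`-central) `A`-bimodule structure on a `k`-module `M`: commuting `k`-bilinear
left and right unital associative actions of `A`. -/
structure KBimod (A : Type*) [Ring A] [Algebra k A]
    (M : Type*) [AddCommGroup M] [Module k M] where
  actl : A →ₗ[k] M →ₗ[k] M
  actr : A →ₗ[k] M →ₗ[k] M
  actl_one : ∀ m, actl 1 m = m
  actl_mul : ∀ a b m, actl (a * b) m = actl a (actl b m)
  actr_one : ∀ m, actr 1 m = m
  actr_mul : ∀ a b m, actr (a * b) m = actr b (actr a m)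
  actl_actr : ∀ a b m, actl a (actr b m) = actr b (actl a m)

variable {A : Type*} [Ring A] [Algebra k A]
variable {M : Type*} [AddCommGroup M] [Module k M]

/-- The tautological bimodule structure of an algebra over itself. -/
def bimodSelf : KBimod k A A where
  actl := LinearMap.mul k A
  actr := (LinearMap.mul k A).flip
  actl_one := fun m => one_mul m
  actl_mul := fun a b m => mul_assoc a b m
  actr_one := fun m => mul_one m
  actr_mul := fun a b m => (mul_assoc m a b).symm
  actl_actr := fun a b m => (mul_assoc a m b).symm

variable {k}

/-- Left action as a map `A ⊗ M → M`. -/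
def actLA (ρ : KBimod k A M) : A ⊗[k] M →ₗ[k] M := TensorProduct.lift ρ.actl

/-- Right action as a map `M ⊗ A → M`. -/
def actRA (ρ : KBimod k A M) : M ⊗[k] A →ₗ[k] M := TensorProduct.lift ρ.actr.flip

variable {V}

/-- Left action of `V` (through `ιA : V → A`) as a map `V ⊗ M → M`. -/
def actLV (ιA : V →ₗ[k] A) (ρ : KBimod k A M) : V ⊗[k] M →ₗ[k] M :=
  actLA ρ ∘ₗ LinearMap.rTensor M ιA

/-- Right action of `V` (through `ιA : V → A`) as a map `M ⊗ V → M`. -/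
def actRV (ιA : V →ₗ[k] A) (ρ : KBimod k A M) : M ⊗[k] V →ₗ[k] M :=
  actRA ρ ∘ₗ LinearMap.lTensor M ιA

/-- Left action of `V` in the form `M ⊗ V → M`, `m ⊗ v ↦ v·m`. -/
def actLV' (ιA : V →ₗ[k] A) (ρ : KBimod k A M) : M ⊗[k] V →ₗ[k] M :=
  actLV ιA ρ ∘ₗ (TensorProduct.comm k M V).toLinearMap

variable (k V)

/-- The Koszul cohomology differential
`b_K : Hom(W_p, M) → Hom(W_{p+1}, M)`,
`b_K(f)(x_1⋯x_{p+1}) = f(x_1⋯x_p)·x_{p+1} - (-1)^p x_1·f(x_2⋯x_{p+1})`. -/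
def bK (ιA : V →ₗ[k] A) (ρ : KBimod k A M) (p : ℕ) :
    ((W k V Rq p) →ₗ[k] M) →ₗ[k] ((W k V Rq (p+1)) →ₗ[k] M) :=
  (LinearMap.lcomp k M
      ((LinearMap.lTensor (W k V Rq p) (oneW k V Rq)) ∘ₗ splitAt k V Rq p 1 (p+1) rfl)) ∘ₗ
    (LinearMap.llcomp k _ _ M (actRV ιA ρ)) ∘ₗ (LinearMap.rTensorHom V)
  - ((-1 : ℤ)^p) •
  ((LinearMap.lcomp k M
      ((LinearMap.rTensor (W k V Rq p) (oneW k V Rq)) ∘ₗ splitAt k V Rq 1 p (p+1) (by omega))) ∘ₗ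
    (LinearMap.llcomp k _ _ M (actLV ιA ρ)) ∘ₗ (LinearMap.lTensorHom V))

/-- The Koszul homology differential
`b^K : M ⊗ W_{p+1} → M ⊗ W_p`,
`b^K(m ⊗ x_1⋯x_{p+1}) = (m·x_1) ⊗ x_2⋯x_{p+1} + (-1)^{p+1} (x_{p+1}·m) ⊗ x_1⋯x_p`. -/
def bKh (ιA : V →ₗ[k] A) (ρ : KBimod k A M) (p : ℕ) :
    M ⊗[k] (W k V Rq (p+1)) →ₗ[k] M ⊗[k] (W k V Rq p) :=
  (LinearMap.rTensor (W k V Rq p) (actRV ιA ρ)) ∘ₗ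
    (TensorProduct.assoc k M V (W k V Rq p)).symm.toLinearMap ∘ₗ
    (LinearMap.lTensor M
      ((LinearMap.rTensor (W k V Rq p) (oneW k V Rq)) ∘ₗ splitAt k V Rq 1 p (p+1) (by omega)))
  + ((-1 : ℤ)^(p+1)) •
  ((LinearMap.rTensor (W k V Rq p) (actLV' ιA ρ)) ∘ₗ
    (TensorProduct.assoc k M V (W k V Rq p)).symm.toLinearMap ∘ₗ
    (LinearMap.lTensor M
      ((TensorProduct.comm k (W k V Rq p) V).toLinearMap ∘ₗ
        (LinearMap.lTensor (W k V Rq p) (oneW k V Rq)) ∘ₗ splitAt k V Rq p 1 (p+1) rfl)))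

/-- Koszul cup product of an `M`-valued cochain (on the left) with an `A`-valued cochain
(on the right): `(f ⌣_K g)(x_1⋯x_r) = (-1)^{pq} f(x_1⋯x_p)·g(x_{p+1}⋯x_r)`. -/
def cupMA (ρ : KBimod k A M) (p q r : ℕ) (h : p + q = r)
    (f : (W k V Rq p) →ₗ[k] M) (g : (W k V Rq q) →ₗ[k] A) : (W k V Rq r) →ₗ[k] M :=
  ((-1 : ℤ)^(p*q)) • (actRA ρ ∘ₗ TensorProduct.map f g ∘ₗ splitAt k V Rq p q r h)

/-- Koszul cup product of an `A`-valued cochain (on the left) with an `M`-valued cochain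
(on the right): `(f ⌣_K g)(x_1⋯x_r) = (-1)^{pq} f(x_1⋯x_p)·g(x_{p+1}⋯x_r)`. -/
def cupAM (ρ : KBimod k A M) (p q r : ℕ) (h : p + q = r)
    (f : (W k V Rq p) →ₗ[k] A) (g : (W k V Rq q) →ₗ[k] M) : (W k V Rq r) →ₗ[k] M :=
  ((-1 : ℤ)^(p*q)) • (actLA ρ ∘ₗ TensorProduct.map f g ∘ₗ splitAt k V Rq p q r h)

/-- Left Koszul cap product `g ⌢_K -` of an `A`-valued `q`-cochain with Koszul chains:
`g ⌢_K (m ⊗ x_1⋯x_r) = (-1)^{(r-q)q} (g(x_{s+1}⋯x_r)·m) ⊗ x_1⋯x_s` where `s = r - q`. -/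
def capL (ρ : KBimod k A M) (q s r : ℕ) (h : s + q = r) (g : (W k V Rq q) →ₗ[k] A) :
    M ⊗[k] (W k V Rq r) →ₗ[k] M ⊗[k] (W k V Rq s) :=
  ((-1 : ℤ)^(s*q)) •
    ((LinearMap.rTensor (W k V Rq s)
        (actLA ρ ∘ₗ (TensorProduct.comm k M A).toLinearMap ∘ₗ LinearMap.lTensor M g)) ∘ₗ
      (TensorProduct.assoc k M (W k V Rq q) (W k V Rq s)).symm.toLinearMap ∘ₗ
      (LinearMap.lTensor M
        ((TensorProduct.comm k (W k V Rq s) (W k V Rq q)).toLinearMap ∘ₗ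
          splitAt k V Rq s q r h)))

/-- Right Koszul cap product `- ⌢_K g` of Koszul chains with an `A`-valued `q`-cochain:
`(m ⊗ x_1⋯x_r) ⌢_K g = (-1)^{qr} (m·g(x_1⋯x_q)) ⊗ x_{q+1}⋯x_r`. -/
def capR (ρ : KBimod k A M) (q s r : ℕ) (h : q + s = r) (g : (W k V Rq q) →ₗ[k] A) :
    M ⊗[k] (W k V Rq r) →ₗ[k] M ⊗[k] (W k V Rq s) :=
  ((-1 : ℤ)^(q*r)) •
    ((LinearMap.rTensor (W k V Rq s) (actRA ρ ∘ₗ LinearMap.lTensor M g)) ∘ₗ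
      (TensorProduct.assoc k M (W k V Rq q) (W k V Rq s)).symm.toLinearMap ∘ₗ
      (LinearMap.lTensor M (splitAt k V Rq q s r h)))
variable (A)

/-- The `p`-th term `A ⊗ W_p ⊗ A` of the bimodule Koszul complex `K(A)`. -/
abbrev Kc (p : ℕ) := (A ⊗[k] (W k V Rq p)) ⊗[k] A

variable {A}

/-- `A ⊗ V → A`, `a ⊗ v ↦ a·ι(v)`. -/
def mulV (ιA : V →ₗ[k] A) : A ⊗[k] V →ₗ[k] A :=
  LinearMap.mul' k A ∘ₗ LinearMap.lTensor A ιA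

/-- `V ⊗ A → A`, `v ⊗ a ↦ ι(v)·a`. -/
def vMul (ιA : V →ₗ[k] A) : V ⊗[k] A →ₗ[k] A :=
  LinearMap.mul' k A ∘ₗ LinearMap.rTensor A ιA

/-- The differential of the bimodule Koszul complex `K(A)`:
`d(α ⊗ x_1⋯x_{p+1} ⊗ β) = (α x_1) ⊗ x_2⋯x_{p+1} ⊗ β + (-1)^{p+1} α ⊗ x_1⋯x_p ⊗ (x_{p+1} β)`. -/
def dK (ιA : V →ₗ[k] A) (p : ℕ) : Kc k V Rq A (p+1) →ₗ[k] Kc k V Rq A p :=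
  (LinearMap.rTensor A
    ((LinearMap.rTensor (W k V Rq p) (mulV k V ιA)) ∘ₗ
      (TensorProduct.assoc k A V (W k V Rq p)).symm.toLinearMap ∘ₗ
      (LinearMap.lTensor A
        ((LinearMap.rTensor (W k V Rq p) (oneW k V Rq)) ∘ₗ splitAt k V Rq 1 p (p+1) (by omega)))))
  + ((-1 : ℤ)^(p+1)) •
    ((LinearMap.lTensor (A ⊗[k] (W k V Rq p)) (vMul k V ιA)) ∘ₗ
      (TensorProduct.assoc k (A ⊗[k] (W k V Rq p)) V A).toLinearMap ∘ₗ
      (LinearMap.rTensor A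
        ((TensorProduct.assoc k A (W k V Rq p) V).symm.toLinearMap ∘ₗ
          (LinearMap.lTensor A
            ((LinearMap.lTensor (W k V Rq p) (oneW k V Rq)) ∘ₗ splitAt k V Rq p 1 (p+1) rfl)))))

/-- The map `φ̃ : A^e ⊗ W_p → K(A)_p`, `(α ⊗ β) ⊗ w ↦ β ⊗ w ⊗ α`. -/
def phiT (p : ℕ) : (A ⊗[k] A) ⊗[k] (W k V Rq p) →ₗ[k] Kc k V Rq A p :=
  (TensorProduct.comm k A (A ⊗[k] (W k V Rq p))).toLinearMap ∘ₗ
    (TensorProduct.assoc k A A (W k V Rq p)).toLinearMap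

/-- The left cap action of an `A`-valued `p`-cochain on the Koszul complex:
`f ⌢_K (α ⊗ x_1⋯x_r ⊗ β) = (-1)^{(r-p)p} α ⊗ x_1⋯x_s ⊗ (f(x_{s+1}⋯x_r)β)`, `s = r - p`. -/
def capKL (p s r : ℕ) (h : s + p = r) (f : (W k V Rq p) →ₗ[k] A) :
    Kc k V Rq A r →ₗ[k] Kc k V Rq A s :=
  ((-1 : ℤ)^(s*p)) •
    ((LinearMap.lTensor (A ⊗[k] (W k V Rq s))
        (LinearMap.mul' k A ∘ₗ LinearMap.rTensor A f)) ∘ₗ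
      (TensorProduct.assoc k (A ⊗[k] (W k V Rq s)) (W k V Rq p) A).toLinearMap ∘ₗ
      (LinearMap.rTensor A
        ((TensorProduct.assoc k A (W k V Rq s) (W k V Rq p)).symm.toLinearMap ∘ₗ
          (LinearMap.lTensor A (splitAt k V Rq s p r h)))))

/-- The right cap action of an `A`-valued `p`-cochain on the Koszul complex:
`(α ⊗ x_1⋯x_r ⊗ β) ⌢_K f = (-1)^{pr} (α f(x_1⋯x_p)) ⊗ x_{p+1}⋯x_r ⊗ β`. -/
def capKR (p s r : ℕ) (h : p + s = r) (f : (W k V Rq p) →ₗ[k] A) :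
    Kc k V Rq A r →ₗ[k] Kc k V Rq A s :=
  ((-1 : ℤ)^(p*r)) •
    (LinearMap.rTensor A
      ((LinearMap.rTensor (W k V Rq s) (LinearMap.mul' k A ∘ₗ LinearMap.lTensor A f)) ∘ₗ
        (TensorProduct.assoc k A (W k V Rq p) (W k V Rq s)).symm.toLinearMap ∘ₗ
        (LinearMap.lTensor A (splitAt k V Rq p s r h))))

/-- Right multiplication by `β ⊗ α` in the enveloping algebra `A^e = A ⊗ A^{op}`:
`(x ⊗ y) ↦ xβ ⊗ αy`. -/
def aeR (bb aa : A) : (A ⊗[k] A) →ₗ[k] A ⊗[k] A :=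
  TensorProduct.map (LinearMap.mulRight k bb) (LinearMap.mulLeft k aa)

/-- The bimodule `A^e = A ⊗ A^{op}` (via its left regular `A^e`-module structure):
`a·(α ⊗ β)·b = aα ⊗ βb`. -/
def bimodAe : KBimod k A (A ⊗[k] A) where
  actl := (LinearMap.rTensorHom A) ∘ₗ (LinearMap.mul k A)
  actr := (LinearMap.lTensorHom A) ∘ₗ (LinearMap.mul k A).flip
  actl_one := fun m => by
    induction m using TensorProduct.induction_on with
    | zero => simp
    | tmul x y => simp
    | add x y hx hy => simp_all
  actl_mul := fun a b m => by
    induction m using TensorProduct.induction_on with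
    | zero => simp
    | tmul x y => simp [mul_assoc]
    | add x y hx hy => simp_all
  actr_one := fun m => by
    induction m using TensorProduct.induction_on with
    | zero => simp
    | tmul x y => simp
    | add x y hx hy => simp_all
  actr_mul := fun a b m => by
    induction m using TensorProduct.induction_on with
    | zero => simp
    | tmul x y => simp [mul_assoc]
    | add x y hx hy => simp_all
  actl_actr := fun a b m => by
    induction m using TensorProduct.induction_on with
    | zero => simp
    | tmul x y => simp
    | add x y hx hy => simp_all
/-- `(p, n-p)`-shuffles: permutations increasing on the first `p` and on the last `n - p`
positions. -/
def IsShuffle (n p : ℕ) (σ : Equiv.Perm (Fin n)) : Prop :=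
  (∀ i j : Fin n, (i : ℕ) < p → (j : ℕ) < p → i < j → σ i < σ j) ∧
  (∀ i j : Fin n, p ≤ (i : ℕ) → p ≤ (j : ℕ) → i < j → σ i < σ j)

variable {n : ℕ}

/-- The element `[x_{c(1)} ∧ ⋯ ∧ x_{c(p)}] = Ant_p(x_{c(1)} ⊗ ⋯ ⊗ x_{c(p)})` of `W_p`. -/
def wedgeB (x : Module.Basis (Fin n) k V) (p : ℕ) (c : Fin p → Fin n) : W k V Rq p :=
  projW k V Rq p (Ant k V p (PiTensorProduct.tprod k (fun i => x (c i))))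

open Classical in
/-- The duality map `θ_M : Hom(W_p, M) → M ⊗ W_{n-p}` (with `s = n - p`), i.e. the Koszul cap
product with the fundamental class `c = 1 ⊗ [x_1 ∧ ⋯ ∧ x_n]`:
`θ_M(f) = (-1)^{np} Σ_{σ ∈ Sh(p,s)} sgn(σ) f([x_{σ(1)} ∧ ⋯ ∧ x_{σ(p)}]) ⊗
[x_{σ(p+1)} ∧ ⋯ ∧ x_{σ(n)}]`. -/
def theta (x : Module.Basis (Fin n) k V) (p s : ℕ) (h : p + s = n) :
    ((W k V Rq p) →ₗ[k] M) →ₗ[k] M ⊗[k] (W k V Rq s) :=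
  ((-1 : ℤ)^(n*p)) • ∑ σ : Equiv.Perm (Fin n),
    if IsShuffle n p σ then
      (Equiv.Perm.sign σ : ℤ) •
        (((TensorProduct.mk k M (W k V Rq s)).flip
            (wedgeB k V Rq x s (fun i => σ (Fin.cast h (Fin.natAdd p i))))) ∘ₗ
          (LinearMap.applyₗ (wedgeB k V Rq x p (fun i => σ (Fin.castLE (by omega) i)))))
    else 0

/-- Koszul cocycles: the kernel of `b_K`. -/
def cocycles (ιA : V →ₗ[k] A) (ρ : KBimod k A M) (p : ℕ) :
    Submodule k ((W k V Rq p) →ₗ[k] M) :=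
  LinearMap.ker (bK k V Rq ιA ρ p)

/-- Koszul coboundaries: the image of `b_K` (trivial for `p = 0`). -/
def cobound (ιA : V →ₗ[k] A) (ρ : KBimod k A M) (p : ℕ) :
    Submodule k ((W k V Rq p) →ₗ[k] M) :=
  ⨆ (q : ℕ) (h : q + 1 = p),
    Submodule.map (LinearEquiv.arrowCongr (wCast k V Rq h) (LinearEquiv.refl k M)).toLinearMap
      (LinearMap.range (bK k V Rq ιA ρ q))

/-- Koszul cohomology `HK^p(A, M)`. -/
def HKco (ιA : V →ₗ[k] A) (ρ : KBimod k A M) (p : ℕ) :=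
  (cocycles k V Rq ιA ρ p) ⧸
    (Submodule.comap (cocycles k V Rq ιA ρ p).subtype (cobound k V Rq ιA ρ p))

instance (ιA : V →ₗ[k] A) (ρ : KBimod k A M) (p : ℕ) :
    AddCommGroup (HKco k V Rq ιA ρ p) := by unfold HKco; infer_instance
instance (ιA : V →ₗ[k] A) (ρ : KBimod k A M) (p : ℕ) :
    Module k (HKco k V Rq ιA ρ p) := by unfold HKco; infer_instance

/-- Koszul cycles: the kernel of `b^K` (everything in degree `0`). -/
def cycles (ιA : V →ₗ[k] A) (ρ : KBimod k A M) (d : ℕ) :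
    Submodule k (M ⊗[k] (W k V Rq d)) :=
  ⨅ (e : ℕ) (h : e + 1 = d),
    LinearMap.ker ((bKh k V Rq ιA ρ e) ∘ₗ
      (TensorProduct.congr (LinearEquiv.refl k M) (wCast k V Rq h.symm)).toLinearMap)

/-- Koszul boundaries: the image of `b^K`. -/
def bound (ιA : V →ₗ[k] A) (ρ : KBimod k A M) (d : ℕ) :
    Submodule k (M ⊗[k] (W k V Rq d)) :=
  LinearMap.range (bKh k V Rq ιA ρ d)

instance instCyclesAddCommGroup (ιA : V →ₗ[k] A) (ρ : KBimod k A M) (d : ℕ) :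
    AddCommGroup ↥(cycles k V Rq ιA ρ d) := Submodule.addCommGroup _

instance instCyclesModule (ιA : V →ₗ[k] A) (ρ : KBimod k A M) (d : ℕ) :
    Module k ↥(cycles k V Rq ιA ρ d) := Submodule.module _

/-- Koszul homology `HK_d(A, M)`. -/
def HKho (ιA : V →ₗ[k] A) (ρ : KBimod k A M) (d : ℕ) :=
  ↥(cycles k V Rq ιA ρ d) ⧸
    (Submodule.comap (cycles k V Rq ιA ρ d).subtype (bound k V Rq ιA ρ d))

instance (ιA : V →ₗ[k] A) (ρ : KBimod k A M) (d : ℕ) :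
    AddCommGroup (HKho k V Rq ιA ρ d) := by unfold HKho; infer_instance
instance (ιA : V →ₗ[k] A) (ρ : KBimod k A M) (d : ℕ) :
    Module k (HKho k V Rq ιA ρ d) := by unfold HKho; infer_instance

end

/-- The canonical linear map `V → S(V)`. -/
noncomputable def ιS (k : Type*) [Field k] (V : Type*) [AddCommGroup V] [Module k V] :
    V →ₗ[k] SV k V := ιQ k V (Rsym k V)

/-! Every `w ∈ W_{p+1}` lies in `V^{⊗i} ⊗ R ⊗ V^{⊗j}` for all positions, and `R` consists of
antisymmetric tensors, so each adjacent transposition acts on `w` by `-1`; hence any permutation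
acts by its sign. In particular moving the last tensor factor of `w` to the front multiplies `w`
by `(-1)^p`, i.e. the decomposition `w = Σ u_j ⊗ w''_j` is `(-1)^p` times the rotated
decomposition `w = Σ w'_i ⊗ v_i`. For a central bimodule `v·m = m·v`, so the two terms of
`b_K(f)(w)` cancel. -/

section KoszulAntisymmetry

variable {k : Type*} [Field k] {V : Type*} [AddCommGroup V] [Module k V]

lemma reindex_mul {n : ℕ} (σ τ : Equiv.Perm (Fin n)) (x : TP k V n) :
    reindex k (fun _ => V) (σ * τ) x = reindex k (fun _ => V) σ (reindex k (fun _ => V) τ x) :=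
  (reindex_reindex τ σ x).symm

lemma tpCast_reindex {m n : ℕ} (h : m = n) (σ : Equiv.Perm (Fin m)) (x : TP k V m) :
    tpCast k V h (reindex k (fun _ => V) σ x)
      = reindex k (fun _ => V) ((finCongr h).permCongr σ) (tpCast k V h x) := by
  have hσ : σ.trans (finCongr h) = (finCongr h).trans ((finCongr h).permCongr σ) := by
    ext; simp [Equiv.permCongr_apply]
  exact (reindex_reindex σ (finCongr h) x).trans
    (hσ ▸ (reindex_reindex (finCongr h) ((finCongr h).permCongr σ) x).symm)

lemma tpCast_tpCast {a b c : ℕ} (h : a = b) (h' : b = c) (x : TP k V a) :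
    tpCast k V h' (tpCast k V h x) = tpCast k V (h.trans h') x :=
  TensorPower.cast_cast h h' x

lemma tpCast_self {n : ℕ} (h : n = n) (x : TP k V n) : tpCast k V h x = x :=
  DFunLike.congr_fun (TensorPower.cast_refl k V h) x

lemma tpMul_tprod {p q : ℕ} (f : Fin p → V) (g : Fin q → V) :
    tpMul k V p q (tprod k f ⊗ₜ tprod k g) = tprod k (Fin.append f g) :=
  TensorPower.tprod_mul_tprod k f g

lemma tpMul_comp_map_reindex {p q : ℕ} (σ : Equiv.Perm (Fin p)) (τ : Equiv.Perm (Fin q)) :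
    (tpMul k V p q).toLinearMap ∘ₗ
        map (reindex k (fun _ => V) σ).toLinearMap (reindex k (fun _ => V) τ).toLinearMap
      = (reindex k (fun _ => V) (finSumFinEquiv.permCongr (σ.sumCongr τ))).toLinearMap ∘ₗ
        (tpMul k V p q).toLinearMap := by
  ext f g
  simp only [LinearMap.compMultilinearMap_apply, AlgebraTensorModule.curry_apply,
    LinearMap.restrictScalars_self, curry_apply, LinearMap.coe_comp, LinearEquiv.coe_coe,
    Function.comp_apply, map_tmul, reindex_tprod, tpMul_tprod]
  congr 1
  funext i
  refine Fin.addCases (fun i => ?_) (fun i => ?_) i <;> simp [Equiv.permCongr_def]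

lemma tpMul_comp_comm (p q : ℕ) :
    (tpMul k V q p).toLinearMap ∘ₗ (TensorProduct.comm k _ _).toLinearMap
      = (reindex k (fun _ => V) finAddFlip).toLinearMap ∘ₗ (tpMul k V p q).toLinearMap := by
  ext f g
  simp only [LinearEquiv.comp_coe, LinearMap.compMultilinearMap_apply,
    AlgebraTensorModule.curry_apply, LinearMap.restrictScalars_self, curry_apply,
    LinearEquiv.coe_coe, LinearEquiv.trans_apply, comm_tmul, tpMul_tprod, reindex_tprod]
  congr 1
  funext i
  obtain ⟨j, rfl⟩ := (finAddFlip (m := p) (n := q)).surjective i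
  rw [Equiv.symm_apply_apply]
  refine Fin.addCases (fun j => ?_) (fun j => ?_) j <;> simp

variable (k V) in
def tpMul₃ (i m j : ℕ) :
    TP k V i ⊗[k] (TP k V m ⊗[k] TP k V j) →ₗ[k] TP k V (i + (m + j)) :=
  (tpMul k V i (m + j)).toLinearMap ∘ₗ LinearMap.lTensor (TP k V i) (tpMul k V m j).toLinearMap

/-- `π` acting on the block of positions `i, …, i + m - 1` of `Fin (i + (m + j))`. -/
def permMiddle (i j : ℕ) {m : ℕ} (π : Equiv.Perm (Fin m)) : Equiv.Perm (Fin (i + (m + j))) :=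
  finSumFinEquiv.permCongr
    ((Equiv.refl _).sumCongr (finSumFinEquiv.permCongr (π.sumCongr (Equiv.refl (Fin j)))))

lemma tpMul₃_comp_reindex_middle (i m j : ℕ) (π : Equiv.Perm (Fin m)) :
    tpMul₃ k V i m j ∘ₗ LinearMap.lTensor (TP k V i)
        (LinearMap.rTensor (TP k V j) (reindex k (fun _ => V) π).toLinearMap)
      = (reindex k (fun _ => V) (permMiddle i j π)).toLinearMap ∘ₗ tpMul₃ k V i m j := by
  have inner := tpMul_comp_map_reindex (k := k) (V := V) π (Equiv.refl (Fin j))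
  have outer := tpMul_comp_map_reindex (k := k) (V := V) (Equiv.refl (Fin i))
    (finSumFinEquiv.permCongr (π.sumCongr (Equiv.refl (Fin j))))
  rw [reindex_refl, LinearEquiv.refl_toLinearMap] at inner outer
  rw [tpMul₃, permMiddle, ← LinearMap.comp_assoc, ← outer, LinearMap.comp_assoc,
    LinearMap.comp_assoc, ← LinearMap.lTensor_comp, LinearMap.rTensor_def, inner,
    LinearMap.lTensor_comp, LinearMap.lTensor_def]

lemma swap_castSucc_succ_eq_permCongr_permMiddle {n : ℕ} (i : Fin n) (j : ℕ)
    (h : i + (2 + j) = n + 1) :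
    Equiv.swap i.castSucc i.succ = (finCongr h).permCongr (permMiddle i j (Equiv.swap 0 1)) := by
  simp only [permMiddle, Equiv.permCongr_def, Equiv.Perm.sumCongr_swap_refl,
    Equiv.Perm.sumCongr_refl_swap, Equiv.symm_trans_swap_trans]
  congr 1

variable {Rq : Submodule k (TP k V 2)}

lemma reindex_swap_of_mem_W (hR : ∀ r ∈ Rq, reindex k (fun _ => V) (Equiv.swap 0 1) r = -r)
    {n : ℕ} {w : TP k V (n + 1)} (hw : w ∈ W k V Rq (n + 1)) (i : Fin n) :
    reindex k (fun _ => V) (Equiv.swap i.castSucc i.succ) w = -w := by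
  set j := n - 1 - i
  have h : i + 2 + j = n + 1 := by omega
  have H : i + (2 + j) = n + 1 := by omega
  obtain ⟨_, ⟨y, rfl⟩, rfl⟩ := Submodule.mem_iInf _ |>.mp (Submodule.mem_iInf _ |>.mp
    (Submodule.mem_iInf _ |>.mp hw i) j) h
  have hR' :
      (reindex k (fun _ => V) (Equiv.swap 0 1)).toLinearMap ∘ₗ Rq.subtype = -Rq.subtype :=
    LinearMap.ext fun r => hR r r.2
  have hswap : (reindex k (fun _ => V) (permMiddle i j (Equiv.swap 0 1))).toLinearMap ∘ₗ
        tpMul₃ k V i 2 j ∘ₗ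
          LinearMap.lTensor (TP k V i) (LinearMap.rTensor (TP k V j) Rq.subtype)
      = -(tpMul₃ k V i 2 j ∘ₗ
          LinearMap.lTensor (TP k V i) (LinearMap.rTensor (TP k V j) Rq.subtype)) := by
    rw [← LinearMap.comp_assoc, ← tpMul₃_comp_reindex_middle, LinearMap.comp_assoc,
      ← LinearMap.lTensor_comp, ← LinearMap.rTensor_comp, hR', LinearMap.rTensor_neg,
      LinearMap.lTensor_neg, LinearMap.comp_neg]
  simp only [LinearMap.comp_apply, LinearEquiv.coe_coe]
  rw [tpCast_tpCast, swap_castSucc_succ_eq_permCongr_permMiddle i j H, ← tpCast_reindex,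
    LinearMap.lTensor_comp, LinearMap.comp_apply]
  have := LinearMap.congr_fun hswap y
  simp only [tpMul₃, LinearMap.comp_apply, LinearMap.neg_apply, LinearEquiv.coe_coe] at this
  rw [this, map_neg]

/-- Adjacent transpositions generate `Perm (Fin n)`, and each acts on `W_n` by `-1`. -/
lemma reindex_of_mem_W (hR : ∀ r ∈ Rq, reindex k (fun _ => V) (Equiv.swap 0 1) r = -r)
    {n : ℕ} {w : TP k V n} (hw : w ∈ W k V Rq n) (σ : Equiv.Perm (Fin n)) :
    reindex k (fun _ => V) σ w = (Equiv.Perm.sign σ : ℤ) • w := by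
  cases n with
  | zero => simp [Subsingleton.elim σ (Equiv.refl _), reindex_refl]
  | succ n =>
    have hσ : σ ∈ Submonoid.closure
        (Set.range fun i : Fin n => Equiv.swap i.castSucc i.succ) := by
      rw [Equiv.Perm.mclosure_swap_castSucc_succ]
      exact Submonoid.mem_top σ
    induction hσ using Submonoid.closure_induction with
    | mem τ hτ =>
      obtain ⟨i, rfl⟩ := hτ
      rw [reindex_swap_of_mem_W hR hw, Equiv.Perm.sign_swap Fin.castSucc_lt_succ.ne,
        Units.val_neg, Units.val_one, neg_one_smul]
    | one => rw [Equiv.Perm.one_def, reindex_refl]; simp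
    | mul σ τ _ _ hσ hτ =>
      rw [reindex_mul, hτ, map_zsmul, hσ, smul_smul, Equiv.Perm.sign_mul, Units.val_mul, mul_comm]

lemma reindex_finRotate_of_mem_W
    (hR : ∀ r ∈ Rq, reindex k (fun _ => V) (Equiv.swap 0 1) r = -r)
    {p : ℕ} {w : TP k V (p + 1)} (hw : w ∈ W k V Rq (p + 1)) :
    reindex k (fun _ => V) (finRotate (p + 1)) w = (-1 : ℤ) ^ p • w := by
  rw [reindex_of_mem_W hR hw, sign_finRotate, Nat.add_sub_cancel, Units.val_pow_eq_pow_val,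
    Units.val_neg, Units.val_one]

lemma tpMul_symm_tpCast_of_mem_W
    (hR : ∀ r ∈ Rq, reindex k (fun _ => V) (Equiv.swap 0 1) r = -r)
    {p : ℕ} {w : TP k V (p + 1)} (hw : w ∈ W k V Rq (p + 1)) (h : p + 1 = 1 + p) :
    (tpMul k V 1 p).symm (tpCast k V h w)
      = (-1 : ℤ) ^ p • TensorProduct.comm k _ _ ((tpMul k V p 1).symm w) := by
  have hcomm :=
    LinearMap.congr_fun (tpMul_comp_comm (k := k) (V := V) p 1) ((tpMul k V p 1).symm w)
  simp only [LinearMap.comp_apply, LinearEquiv.coe_coe, LinearEquiv.apply_symm_apply] at hcomm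
  have hflip : reindex k (fun _ => V) finAddFlip w = (-1 : ℤ) ^ p • tpCast k V h w := by
    have hrot := reindex_finRotate_of_mem_W hR hw
    rw [finRotate_succ, ← reindex_reindex] at hrot
    have := congrArg (tpCast k V h) hrot
    rwa [map_zsmul, ← tpCast, tpCast_tpCast, tpCast_self] at this
  rw [LinearEquiv.symm_apply_eq, map_zsmul, hcomm, hflip, smul_smul, ← mul_pow, neg_one_mul,
    neg_neg, one_pow, one_smul]

lemma reindex_swap_tp2_symm (z : V ⊗[k] V) :
    reindex k (fun _ => V) (Equiv.swap 0 1) ((tp2 k V).symm z)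
      = (tp2 k V).symm (TensorProduct.comm k V V z) := by
  have hflip : (Equiv.swap 0 1 : Equiv.Perm (Fin 2)) = finAddFlip (m := 1) (n := 1) := by decide
  induction z using TensorProduct.induction_on with
  | zero => simp
  | add x y hx hy => simp only [map_add, hx, hy]
  | tmul a b =>
    have := LinearMap.congr_fun (tpMul_comp_comm (k := k) (V := V) 1 1)
      ((oneEquiv k V).symm a ⊗ₜ (oneEquiv k V).symm b)
    simp only [LinearMap.comp_apply, LinearEquiv.coe_coe, comm_tmul] at this
    simp only [tp2, LinearEquiv.trans_symm, LinearEquiv.trans_apply, LinearEquiv.symm_symm,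
      congr_symm_tmul, comm_tmul, hflip]
    exact this.symm

lemma reindex_swap_of_mem_Rsym {r : TP k V 2} (hr : r ∈ Rsym k V) :
    reindex k (fun _ => V) (Equiv.swap 0 1) r = -r := by
  induction hr using Submodule.span_induction with
  | mem x hx =>
    obtain ⟨a, b, rfl⟩ := hx
    rw [reindex_swap_tp2_symm, map_sub, comm_tmul, comm_tmul, ← map_neg, neg_sub]
  | zero => simp
  | add x y _ _ hx hy => rw [map_add, hx, hy, neg_add]
  | smul c x _ hx => rw [map_smul, hx, smul_neg]

end KoszulAntisymmetry

section KoszulCochains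

variable {k : Type*} [Field k] {V : Type*} [AddCommGroup V] [Module k V]
  {Rq : Submodule k (TP k V 2)}

lemma mem_W_one (x : TP k V 1) : x ∈ W k V Rq 1 := by
  simp only [W, Submodule.mem_iInf]
  intro i j h
  omega

lemma coe_projW_of_mem {p : ℕ} {x : TP k V p} (hx : x ∈ W k V Rq p) :
    (projW k V Rq p x : TP k V p) = x :=
  congrArg Subtype.val (LinearMap.congr_fun (LinearMap.exists_leftInverse_of_injective
    (W k V Rq p).subtype (Submodule.ker_subtype _)).choose_spec ⟨x, hx⟩)

lemma oneW_comp_projW : oneW k V Rq ∘ₗ projW k V Rq 1 = (oneEquiv k V).toLinearMap :=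
  LinearMap.ext fun x => by
    simp only [oneW, LinearMap.comp_apply, Submodule.coe_subtype, coe_projW_of_mem (mem_W_one x)]

lemma map_splitAt {N N' : Type*} [AddCommGroup N] [Module k N] [AddCommGroup N'] [Module k N']
    {p q r : ℕ} (h : p + q = r) (f : W k V Rq p →ₗ[k] N) (g : W k V Rq q →ₗ[k] N')
    (w : W k V Rq r) :
    map f g (splitAt k V Rq p q r h w)
      = map (f ∘ₗ projW k V Rq p) (g ∘ₗ projW k V Rq q)
          ((tpMul k V p q).symm (tpCast k V h.symm w)) := by
  rw [TensorProduct.map_comp]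
  rfl

variable {A : Type*} [Ring A] [Algebra k A] {M : Type*} [AddCommGroup M] [Module k M]

lemma bK_apply (ιA : V →ₗ[k] A) (ρ : KBimod k A M) (p : ℕ) (f : W k V Rq p →ₗ[k] M)
    (w : W k V Rq (p + 1)) :
    bK k V Rq ιA ρ p f w
      = actRV ιA ρ (map f (oneW k V Rq) (splitAt k V Rq p 1 (p + 1) rfl w))
        - (-1 : ℤ) ^ p •
          actLV ιA ρ (map (oneW k V Rq) f (splitAt k V Rq 1 p (p + 1) (by omega) w)) := by
  simp only [bK, LinearMap.sub_apply, LinearMap.coe_comp, LinearMap.coe_rTensorHom,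
    Function.comp_apply, LinearMap.smul_apply, LinearMap.coe_lTensorHom, LinearMap.lcomp_apply,
    LinearMap.llcomp_apply]
  rw [← LinearMap.comp_apply (LinearMap.rTensor V f), LinearMap.rTensor_comp_lTensor,
    ← LinearMap.comp_apply (LinearMap.lTensor V f), LinearMap.lTensor_comp_rTensor]

lemma actRV_eq_actLV' {ιA : V →ₗ[k] A} {ρ : KBimod k A M}
    (hcentral : ∀ (a : A) (m : M), ρ.actl a m = ρ.actr a m) :
    actRV ιA ρ = actLV' ιA ρ :=
  TensorProduct.ext' fun m v => by
    simp [actRV, actLV', actLV, actRA, actLA, hcentral]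

end KoszulCochains

/-- for `A = S(V)` and an `A`-central `A`-bimodule `M`, the Koszul cohomology
differential vanishes: `b_K(f) = 0` for every Koszul cochain `f`. -/
theorem statement3 (k : Type*) [Field k] (V : Type*) [AddCommGroup V] [Module k V]
    (M : Type*) [AddCommGroup M] [Module k M] (ρ : KBimod k (SV k V) M)
    (hcentral : ∀ (a : SV k V) (m : M), ρ.actl a m = ρ.actr a m)
    (p : ℕ) (f : (W k V (Rsym k V) p) →ₗ[k] M) :
    bK k V (Rsym k V) (ιS k V) ρ p f = 0 := by
  ext w
  have hsplit := tpMul_symm_tpCast_of_mem_W (fun _ => reindex_swap_of_mem_Rsym) w.2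
    (show p + 1 = 1 + p by omega)
  rw [LinearMap.zero_apply, bK_apply, map_splitAt, map_splitAt, oneW_comp_projW, tpCast_self,
    hsplit, actRV_eq_actLV' hcentral, actLV', LinearMap.comp_apply, LinearEquiv.coe_coe,
    ← TensorProduct.map_comm, map_zsmul, map_zsmul, smul_smul, ← mul_pow, neg_one_mul, neg_neg,
    one_pow, one_smul, sub_self]
end

section
/- Let k be a field, V a finite-dimensional k-vector space, R ⊆ V⊗V a subspace, and A = T(V)/(R) the associated quadratic algebra. Let e_A : W_1 = V → A be the fundamental Koszul 1-cocycle induced by the inclusion of V in A. Then for any A-bimodule M: (i) for every k-linear map f : W_p → M, b_K(f) = −( e_A ⌣_K f − (−1)^p f ⌣_K e_A ); (ii) for every z ∈ M ⊗ W_p, b^K(z) = −( e_A ⌢_K z − (−1)^p z ⌢_K e_A ). -/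
open TensorProduct PiTensorProduct

set_option maxHeartbeats 1600000
set_option synthInstance.maxHeartbeats 400000

/-! Both Koszul differentials are built from the actions of `V` on `M` through the splittings
`W_{p+1} ⊆ W_p ⊗ V` and `W_{p+1} ⊆ V ⊗ W_p`. Composing with `e_A = ι ∘ (W_1 ≅ V)` identifies
each of these terms with a cup or cap product by `e_A`, up to the sign `(-1)^{p·1}` or
`(-1)^{1·(p+1)}` built into the products; since `(-1)^p (-1)^p = 1`, the signs match. -/

namespace Koszul

variable {k : Type*} [Field k] {V : Type*} [AddCommGroup V] [Module k V]
  (Rq : Submodule k (TP k V 2))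
  {A : Type*} [Ring A] [Algebra k A] {M : Type*} [AddCommGroup M] [Module k M]
  (ρ : KBimod k A M) (ιA : V →ₗ[k] A)

theorem actRA_comp_map_oneW {p : ℕ} (f : (W k V Rq p) →ₗ[k] M) :
    actRA ρ ∘ₗ TensorProduct.map f (ιA ∘ₗ oneW k V Rq)
      = (actRV ιA ρ ∘ₗ LinearMap.rTensor V f) ∘ₗ
          LinearMap.lTensor (W k V Rq p) (oneW k V Rq) := by
  ext a b
  simp [actRA, actRV]

theorem actLA_comp_map_oneW {p : ℕ} (f : (W k V Rq p) →ₗ[k] M) :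
    actLA ρ ∘ₗ TensorProduct.map (ιA ∘ₗ oneW k V Rq) f
      = (actLV ιA ρ ∘ₗ LinearMap.lTensor V f) ∘ₗ
          LinearMap.rTensor (W k V Rq p) (oneW k V Rq) := by
  ext a b
  simp [actLA, actLV]

theorem bK_eq_neg_cup_sub (p : ℕ) (f : (W k V Rq p) →ₗ[k] M) :
    bK k V Rq ιA ρ p f
      = -(cupAM k V Rq ρ 1 p (p+1) (Nat.add_comm 1 p) (ιA ∘ₗ oneW k V Rq) f
          - ((-1 : ℤ)^p) • cupMA k V Rq ρ p 1 (p+1) rfl f (ιA ∘ₗ oneW k V Rq)) := by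
  simp only [bK, cupAM, cupMA, mul_one, one_mul, LinearMap.sub_apply, LinearMap.smul_apply,
    LinearMap.comp_apply, LinearMap.llcomp_apply', LinearMap.lcomp_apply',
    LinearMap.coe_rTensorHom, LinearMap.coe_lTensorHom, ← LinearMap.comp_assoc]
  rw [actRA_comp_map_oneW, actLA_comp_map_oneW, smul_smul, ← pow_add, Even.neg_one_pow ⟨p, rfl⟩,
    one_smul, neg_sub]

theorem rTensor_actRA_comp_assoc_symm (p : ℕ) :
    LinearMap.rTensor (W k V Rq p) (actRA ρ ∘ₗ LinearMap.lTensor M (ιA ∘ₗ oneW k V Rq)) ∘ₗ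
        (TensorProduct.assoc k M (W k V Rq 1) (W k V Rq p)).symm.toLinearMap
      = LinearMap.rTensor (W k V Rq p) (actRV ιA ρ) ∘ₗ
          (TensorProduct.assoc k M V (W k V Rq p)).symm.toLinearMap ∘ₗ
          LinearMap.lTensor M (LinearMap.rTensor (W k V Rq p) (oneW k V Rq)) := by
  ext m a b
  simp [actRA, actRV]

theorem rTensor_actLA_comp_assoc_symm (p : ℕ) :
    LinearMap.rTensor (W k V Rq p)
        (actLA ρ ∘ₗ (TensorProduct.comm k M A).toLinearMap ∘ₗ
          LinearMap.lTensor M (ιA ∘ₗ oneW k V Rq)) ∘ₗ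
        (TensorProduct.assoc k M (W k V Rq 1) (W k V Rq p)).symm.toLinearMap ∘ₗ
        LinearMap.lTensor M (TensorProduct.comm k (W k V Rq p) (W k V Rq 1)).toLinearMap
      = LinearMap.rTensor (W k V Rq p) (actLV' ιA ρ) ∘ₗ
          (TensorProduct.assoc k M V (W k V Rq p)).symm.toLinearMap ∘ₗ
          LinearMap.lTensor M ((TensorProduct.comm k (W k V Rq p) V).toLinearMap ∘ₗ
            LinearMap.lTensor (W k V Rq p) (oneW k V Rq)) := by
  ext m b a
  simp [actLA, actLV', actLV]

theorem capR_oneW (p : ℕ) (h : 1 + p = p + 1) :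
    capR k V Rq ρ 1 p (p+1) h (ιA ∘ₗ oneW k V Rq)
      = ((-1 : ℤ)^(p+1)) •
          (LinearMap.rTensor (W k V Rq p) (actRV ιA ρ) ∘ₗ
            (TensorProduct.assoc k M V (W k V Rq p)).symm.toLinearMap ∘ₗ
            LinearMap.lTensor M
              (LinearMap.rTensor (W k V Rq p) (oneW k V Rq) ∘ₗ splitAt k V Rq 1 p (p+1) h)) := by
  rw [capR, one_mul, ← LinearMap.comp_assoc, rTensor_actRA_comp_assoc_symm]
  simp only [LinearMap.comp_assoc, LinearMap.lTensor_comp]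

theorem capL_oneW (p : ℕ) (h : p + 1 = p + 1) :
    capL k V Rq ρ 1 p (p+1) h (ιA ∘ₗ oneW k V Rq)
      = ((-1 : ℤ)^p) •
          (LinearMap.rTensor (W k V Rq p) (actLV' ιA ρ) ∘ₗ
            (TensorProduct.assoc k M V (W k V Rq p)).symm.toLinearMap ∘ₗ
            LinearMap.lTensor M
              ((TensorProduct.comm k (W k V Rq p) V).toLinearMap ∘ₗ
                LinearMap.lTensor (W k V Rq p) (oneW k V Rq) ∘ₗ splitAt k V Rq p 1 (p+1) h)) := by
  rw [capL, mul_one]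
  congr 1
  simpa only [LinearMap.comp_assoc, LinearMap.lTensor_comp] using
    congrArg (· ∘ₗ LinearMap.lTensor M (splitAt k V Rq p 1 (p+1) h))
      (rTensor_actLA_comp_assoc_symm Rq ρ ιA p)

theorem bKh_eq_neg_cap_sub (p : ℕ) :
    bKh k V Rq ιA ρ p
      = -(capL k V Rq ρ 1 p (p+1) rfl (ιA ∘ₗ oneW k V Rq)
          - ((-1 : ℤ)^(p+1)) • capR k V Rq ρ 1 p (p+1) (Nat.add_comm 1 p) (ιA ∘ₗ oneW k V Rq)) := by
  rw [capL_oneW, capR_oneW, smul_smul, ← pow_add, Even.neg_one_pow ⟨p + 1, rfl⟩, one_smul,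
    neg_sub, bKh, pow_succ]
  module

end Koszul

/-- the fundamental formulas of Koszul calculus for a quadratic algebra
`A = T(V)/(R)` and any `A`-bimodule `M`, where `e_A : W_1 = V → A` is the fundamental
Koszul 1-cocycle: (i) `b_K(f) = -(e_A ⌣_K f - (-1)^p f ⌣_K e_A)`;
(ii) `b^K(z) = -(e_A ⌢_K z - (-1)^q z ⌢_K e_A)` on chains of degree `q = p + 1`. -/
theorem statement19 (k : Type*) [Field k] (V : Type*) [AddCommGroup V] [Module k V]
    (Rq : Submodule k (TP k V 2))
    (M : Type*) [AddCommGroup M] [Module k M] (ρ : KBimod k (QuadAlg k V Rq) M) :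
    (∀ (p : ℕ) (f : (W k V Rq p) →ₗ[k] M),
      bK k V Rq (ιQ k V Rq) ρ p f
        = -(cupAM k V Rq ρ 1 p (p+1) (by omega) (ιQ k V Rq ∘ₗ oneW k V Rq) f
            - ((-1 : ℤ)^p) •
              cupMA k V Rq ρ p 1 (p+1) rfl f (ιQ k V Rq ∘ₗ oneW k V Rq))) ∧
    (∀ p : ℕ,
      bKh k V Rq (ιQ k V Rq) ρ p
        = -(capL k V Rq ρ 1 p (p+1) (by omega) (ιQ k V Rq ∘ₗ oneW k V Rq)
            - ((-1 : ℤ)^(p+1)) •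
              capR k V Rq ρ 1 p (p+1) (by omega) (ιQ k V Rq ∘ₗ oneW k V Rq))) := by
  exact ⟨Koszul.bK_eq_neg_cup_sub Rq ρ (ιQ k V Rq), Koszul.bKh_eq_neg_cap_sub Rq ρ (ιQ k V Rq)⟩
end
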